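/- A function f : ℤ^n → ℝ ∪ {+∞} is multimodular if and only if the function g : ℤ^n → ℝ ∪ {+∞} defined by g(p) = f(p₁, p₂ − p₁, p₃ − p₂, …, p_n − p_{n−1}) is L♮-convex; equivalently, f(x) = g(x₁, x₁+x₂, …, x₁+⋯+x_n). -/

import Mathlib

/-- Componentwise rounded-up midpoint `⌈(x+y)/2⌉` of two integer vectors. -/
def ceilMid {n : ℕ} (x y : Fin n → ℤ) : Fin n → ℤ := fun i => Int.fdiv (x i + y i + 1) 2

/-- Componentwise rounded-down midpoint `⌊(x+y)/2⌋` of two integer vectors. -/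
def floorMid {n : ℕ} (x y : Fin n → ℤ) : Fin n → ℤ := fun i => Int.fdiv (x i + y i) 2

/-- A function `f : ℤⁿ → ℝ ∪ {+∞}` (encoded into `EReal`) with nonempty effective
domain is L♮-convex if it satisfies discrete midpoint convexity. -/
def IsLNatFn {n : ℕ} (f : (Fin n → ℤ) → EReal) : Prop :=
  (∃ x, f x ≠ ⊤) ∧ ∀ x y, f (ceilMid x y) + f (floorMid x y) ≤ f x + f y

/-- Submodularity on `ℤᵐ` (with the componentwise lattice structure). -/
def Submodular {m : ℕ} (h : (Fin m → ℤ) → EReal) : Prop :=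
  ∀ u v, h (u ⊔ v) + h (u ⊓ v) ≤ h u + h v

/-- `f : ℤⁿ → ℝ ∪ {+∞}` is multimodular if
`f̃(x₀,…,x_n) = f(x₁−x₀, …, x_n−x_{n−1})` is submodular on `ℤ^{n+1}`. -/
def Multimodular {n : ℕ} (f : (Fin n → ℤ) → EReal) : Prop :=
  Submodular (fun x : Fin (n + 1) → ℤ => f (fun i : Fin n => x i.succ - x i.castSucc))

/-- The difference transform `p ↦ (p₁, p₂−p₁, …, p_n−p_{n−1})`. -/
def ddiff {n : ℕ} (p : Fin n → ℤ) : Fin n → ℤ :=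
  fun i => p i - if h : (i : ℕ) = 0 then 0
    else p ⟨(i : ℕ) - 1, Nat.lt_of_le_of_lt (Nat.sub_le _ _) i.isLt⟩

/-- The partial-sum transform `x ↦ (x₁, x₁+x₂, …, x₁+⋯+x_n)`. -/
def psum {n : ℕ} (x : Fin n → ℤ) : Fin n → ℤ :=
  fun i => ∑ j ∈ Finset.univ.filter (fun j => j ≤ i), x j

/-!
Write `g = f ∘ ddiff`. Then `f̃ = g ∘ tailSubHead` with `tailSubHead x = (x₁ - x₀, …, x_n - x₀)`,
so multimodularity of `f` says that the homogenization of `g` is submodular, and the theorem is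
the classical characterization of L♮-convexity through that homogenization. A submodular
function invariant along `𝟙` is midpoint convex: moving `x` down to `y + 1` where it exceeds
it keeps both midpoints and shrinks `∑ |xᵢ - yᵢ|`. Conversely a midpoint convex function is
submodular, by induction on `‖u - v‖∞`, comparing `(u, v)` with pairs at half the distance
built from the midpoints.
-/

open Finset

lemma EReal.le_of_add_le_add_right_of_ne {a b s : EReal} (hst : s ≠ ⊤) (hsb : s ≠ ⊥)
    (h : a + s ≤ b + s) : a ≤ b := by
  lift s to ℝ using ⟨hst, hsb⟩
  exact (EReal.addLECancellable_coe s).add_le_add_iff_right.mp h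

lemma Int.fdiv_two_eq_ediv (a : ℤ) : a.fdiv 2 = a / 2 :=
  Int.fdiv_eq_ediv_of_nonneg a (by norm_num)

section Midpoints

variable {m : ℕ}

lemma ceilMid_comm (x y : Fin m → ℤ) : ceilMid x y = ceilMid y x := by
  funext i; simp only [ceilMid, add_comm (x i)]

lemma floorMid_comm (x y : Fin m → ℤ) : floorMid x y = floorMid y x := by
  funext i; simp only [floorMid, add_comm (x i)]

lemma ceilMid_eq_sup {x y : Fin m → ℤ} (hxy : ∀ i, (x i - y i).natAbs ≤ 1) :
    ceilMid x y = x ⊔ y := by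
  funext i; have := hxy i; simp only [ceilMid, Pi.sup_apply, Int.fdiv_two_eq_ediv]; omega

lemma floorMid_eq_inf {x y : Fin m → ℤ} (hxy : ∀ i, (x i - y i).natAbs ≤ 1) :
    floorMid x y = x ⊓ y := by
  funext i; have := hxy i; simp only [floorMid, Pi.inf_apply, Int.fdiv_two_eq_ediv]; omega

lemma ceilMid_cons (a b : ℤ) (x y : Fin m → ℤ) :
    ceilMid (Fin.cons a x : Fin (m + 1) → ℤ) (Fin.cons b y) =
      Fin.cons (Int.fdiv (a + b + 1) 2) (ceilMid x y) := by
  funext i; cases i using Fin.cases <;> rfl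

lemma floorMid_cons (a b : ℤ) (x y : Fin m → ℤ) :
    floorMid (Fin.cons a x : Fin (m + 1) → ℤ) (Fin.cons b y) =
      Fin.cons (Int.fdiv (a + b) 2) (floorMid x y) := by
  funext i; cases i using Fin.cases <;> rfl

end Midpoints

def DiscreteMidpointConvex {m : ℕ} (h : (Fin m → ℤ) → EReal) : Prop :=
  ∀ x y, h (ceilMid x y) + h (floorMid x y) ≤ h x + h y

lemma isLNatFn_iff {m : ℕ} (h : (Fin m → ℤ) → EReal) :
    IsLNatFn h ↔ (∃ x, h x ≠ ⊤) ∧ DiscreteMidpointConvex h := Iff.rfl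

section Homogeneous

variable {m : ℕ} {h : (Fin m → ℤ) → EReal}

lemma Submodular.translation_submodular (hs : Submodular h) (hinv : ∀ x, h (x + 1) = h x)
    (x y : Fin m → ℤ) : h (x ⊓ (y + 1)) + h (x ⊔ (y + 1) - 1) ≤ h x + h y := by
  calc h (x ⊓ (y + 1)) + h (x ⊔ (y + 1) - 1)
      = h (x ⊔ (y + 1)) + h (x ⊓ (y + 1)) := by rw [add_comm, ← hinv (_ - 1), sub_add_cancel]
    _ ≤ h x + h (y + 1) := hs _ _
    _ = h x + h y := by rw [hinv]

theorem DiscreteMidpointConvex.of_submodular (hs : Submodular h) (hinv : ∀ x, h (x + 1) = h x) :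
    DiscreteMidpointConvex h := by
  suffices H : ∀ N : ℕ, ∀ x y : Fin m → ℤ, ∑ i, (x i - y i).natAbs = N →
      h (ceilMid x y) + h (floorMid x y) ≤ h x + h y from fun x y => H _ x y rfl
  intro N
  induction N using Nat.strong_induction_on with
  | _ N IH =>
  intro x y hN
  by_cases hnear : ∀ i, (x i - y i).natAbs ≤ 1
  · rw [ceilMid_eq_sup hnear, floorMid_eq_inf hnear]
    exact hs x y
  wlog hfar : ∃ i, 2 ≤ x i - y i generalizing x y
  · push Not at hnear hfar
    obtain ⟨i, hi⟩ := hnear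
    have hsymm := this y x (by rw [← hN]; exact sum_congr rfl fun i _ => by omega)
      (fun hyx => by have := hyx i; omega) ⟨i, by have := hfar i; omega⟩
    rwa [ceilMid_comm, floorMid_comm, add_comm (h x)]
  obtain ⟨i₀, hi₀⟩ := hfar
  -- A gap `x i - y i = d ≥ 1` becomes `2 - d`; the other coordinates and both midpoints stay.
  set x' := x ⊓ (y + 1)
  set y' := x ⊔ (y + 1) - 1
  have hx'y' : ∀ i, x' i = min (x i) (y i + 1) ∧ y' i = max (x i) (y i + 1) - 1 :=
    fun i => ⟨rfl, rfl⟩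
  have hc : ceilMid x' y' = ceilMid x y := by
    funext i; have := hx'y' i; simp only [ceilMid, Int.fdiv_two_eq_ediv]; omega
  have hf : floorMid x' y' = floorMid x y := by
    funext i; have := hx'y' i; simp only [floorMid, Int.fdiv_two_eq_ediv]; omega
  have hlt : ∑ i, (x' i - y' i).natAbs < N := by
    rw [← hN]
    exact sum_lt_sum (fun i _ => by have := hx'y' i; omega)
      ⟨i₀, mem_univ _, by have := hx'y' i₀; omega⟩
  calc h (ceilMid x y) + h (floorMid x y) = h (ceilMid x' y') + h (floorMid x' y') := by
        rw [hc, hf]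
    _ ≤ h x' + h y' := IH _ hlt x' y' rfl
    _ ≤ h x + h y := hs.translation_submodular hinv x y

/-- With `c`, `d` the midpoints of `u`, `v`, the submodular inequality for `(u, v)` follows
from those for `(u ⊔ c, d ⊔ v)`, `(u ⊓ c, d ⊓ v)`, `(u, c)`, `(d, v)`, all at about half the
distance, and midpoint convexity at `(u ⊔ c) ⊓ (d ⊔ v)`, `(u ⊓ c) ⊔ (d ⊓ v)`, whose midpoints
are again `c` and `d`. -/
lemma DiscreteMidpointConvex.sup_add_inf_le_of_halves (hb : ∀ x, h x ≠ ⊥)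
    (hd : DiscreteMidpointConvex h) {N : ℕ} {u v : Fin m → ℤ}
    (huv : ∀ i, (u i - v i).natAbs ≤ N + 2)
    (IH : ∀ w z : Fin m → ℤ, (∀ i, (w i - z i).natAbs ≤ N + 1) →
      h (w ⊔ z) + h (w ⊓ z) ≤ h w + h z) :
    h (u ⊔ v) + h (u ⊓ v) ≤ h u + h v := by
  by_cases htop : h u + h v = ⊤
  · exact htop ▸ le_top
  set c := ceilMid u v
  set d := floorMid u v
  have hcd : ∀ i, c i = (u i + v i + 1) / 2 ∧ d i = (u i + v i) / 2 := fun i =>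
    ⟨Int.fdiv_two_eq_ediv _, Int.fdiv_two_eq_ediv _⟩
  set e := (u ⊔ c) ⊓ (d ⊔ v)
  set e' := (u ⊓ c) ⊔ (d ⊓ v)
  have hsup : (u ⊔ c) ⊔ (d ⊔ v) = u ⊔ v := by
    funext i; have := hcd i; have := huv i; simp only [Pi.sup_apply]; omega
  have hinf : (u ⊓ c) ⊓ (d ⊓ v) = u ⊓ v := by
    funext i; have := hcd i; have := huv i; simp only [Pi.inf_apply]; omega
  have hmid : ceilMid e e' = c ∧ floorMid e' e = d := by
    constructor <;> funext i <;> have := hcd i <;>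
      simp only [e, e', ceilMid, floorMid, Int.fdiv_two_eq_ediv, Pi.sup_apply, Pi.inf_apply] <;>
      omega
  have h₁ := IH (u ⊔ c) (d ⊔ v) fun i => by
    have := hcd i; have := huv i; simp only [Pi.sup_apply]; omega
  have h₂ := IH (u ⊓ c) (d ⊓ v) fun i => by
    have := hcd i; have := huv i; simp only [Pi.inf_apply]; omega
  have h₃ := IH u c fun i => by have := hcd i; have := huv i; omega
  have h₄ := IH d v fun i => by have := hcd i; have := huv i; omega
  have hee' : h c + h d ≤ h e + h e' := by
    simpa only [hmid, floorMid_comm e] using hd e e'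
  have hcd_le : h c + h d ≤ h u + h v := hd u v
  refine EReal.le_of_add_le_add_right_of_ne (s := h c + h d)
    (ne_top_of_le_ne_top htop hcd_le) (EReal.add_ne_bot_iff.mpr ⟨hb c, hb d⟩) ?_
  calc h (u ⊔ v) + h (u ⊓ v) + (h c + h d)
      ≤ h (u ⊔ v) + h (u ⊓ v) + (h e + h e') := by gcongr
    _ = (h (u ⊔ v) + h e) + (h e' + h (u ⊓ v)) := by abel
    _ ≤ (h (u ⊔ c) + h (d ⊔ v)) + (h (u ⊓ c) + h (d ⊓ v)) := by
        rw [← hsup, ← hinf]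
        exact add_le_add h₁ (add_comm (h e') _ ▸ h₂)
    _ = (h (u ⊔ c) + h (u ⊓ c)) + (h (d ⊔ v) + h (d ⊓ v)) := by abel
    _ ≤ (h u + h c) + (h d + h v) := add_le_add h₃ h₄
    _ = h u + h v + (h c + h d) := by abel

theorem Submodular.of_discreteMidpointConvex (hb : ∀ x, h x ≠ ⊥) (hd : DiscreteMidpointConvex h) :
    Submodular h := by
  suffices H : ∀ N : ℕ, ∀ u v : Fin m → ℤ, (∀ i, (u i - v i).natAbs ≤ N + 1) →
      h (u ⊔ v) + h (u ⊓ v) ≤ h u + h v from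
    fun u v => H (∑ i, (u i - v i).natAbs) u v fun i =>
      (single_le_sum (f := fun i => (u i - v i).natAbs) (fun j _ => Nat.zero_le _)
        (mem_univ i)).trans (Nat.le_succ _)
  intro N
  induction N with
  | zero =>
    intro u v huv
    rw [← ceilMid_eq_sup huv, ← floorMid_eq_inf huv]
    exact hd u v
  | succ N IH => exact fun u v huv => hd.sup_add_inf_le_of_halves hb huv IH

end Homogeneous

/-- Identifies `ℤ^{n+1}` modulo the all-ones direction with `ℤⁿ`. -/
def tailSubHead {n : ℕ} (x : Fin (n + 1) → ℤ) : Fin n → ℤ := fun i => x i.succ - x 0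

section TailSubHead

variable {n : ℕ}

lemma tailSubHead_add_one (x : Fin (n + 1) → ℤ) : tailSubHead (x + 1) = tailSubHead x := by
  funext i; simp only [tailSubHead, Pi.add_apply, Pi.one_apply]; ring

lemma tailSubHead_cons_zero (p : Fin n → ℤ) : tailSubHead (Fin.cons 0 p) = p := by
  funext i; simp [tailSubHead]

lemma ddiff_tailSubHead (x : Fin (n + 1) → ℤ) :
    ddiff (tailSubHead x) = fun i => x i.succ - x i.castSucc := by
  funext i
  simp only [ddiff, tailSubHead]
  split_ifs with h0
  · rw [show i.castSucc = 0 from Fin.ext h0]; ring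
  · rw [show (⟨(i : ℕ) - 1, _⟩ : Fin n).succ = i.castSucc from
      Fin.ext (by simp only [Fin.succ_mk, Fin.val_castSucc]; omega)]
    ring

/-- When `x 0 + y 0` is odd, `tailSubHead` swaps the two midpoints. -/
lemma DiscreteMidpointConvex.comp_tailSubHead {g : (Fin n → ℤ) → EReal}
    (hg : DiscreteMidpointConvex g) : DiscreteMidpointConvex (g ∘ tailSubHead) := by
  intro x y
  simp only [Function.comp_apply]
  rcases Int.emod_two_eq (x 0 + y 0) with hp | hp
  · have hc : tailSubHead (ceilMid x y) = ceilMid (tailSubHead x) (tailSubHead y) := by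
      funext i; simp only [tailSubHead, ceilMid, Int.fdiv_two_eq_ediv]; omega
    have hf : tailSubHead (floorMid x y) = floorMid (tailSubHead x) (tailSubHead y) := by
      funext i; simp only [tailSubHead, floorMid, Int.fdiv_two_eq_ediv]; omega
    rw [hc, hf]
    exact hg _ _
  · have hc : tailSubHead (ceilMid x y) = floorMid (tailSubHead x) (tailSubHead y) := by
      funext i; simp only [tailSubHead, ceilMid, floorMid, Int.fdiv_two_eq_ediv]; omega
    have hf : tailSubHead (floorMid x y) = ceilMid (tailSubHead x) (tailSubHead y) := by
      funext i; simp only [tailSubHead, ceilMid, floorMid, Int.fdiv_two_eq_ediv]; omega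
    rw [hc, hf, add_comm]
    exact hg _ _

lemma DiscreteMidpointConvex.comp_cons_zero {h : (Fin (n + 1) → ℤ) → EReal}
    (hh : DiscreteMidpointConvex h) : DiscreteMidpointConvex fun p => h (Fin.cons 0 p) := by
  intro p q
  simpa only [ceilMid_cons, floorMid_cons, add_zero, zero_add, Int.reduceFDiv] using
    hh (Fin.cons 0 p) (Fin.cons 0 q)

theorem submodular_comp_tailSubHead_iff {g : (Fin n → ℤ) → EReal} (hb : ∀ p, g p ≠ ⊥) :
    Submodular (g ∘ tailSubHead) ↔ DiscreteMidpointConvex g := by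
  refine ⟨fun hs => ?_, fun hg => .of_discreteMidpointConvex (fun x => hb _) hg.comp_tailSubHead⟩
  have hinv (x : Fin (n + 1) → ℤ) : (g ∘ tailSubHead) (x + 1) = (g ∘ tailSubHead) x := by
    simp only [Function.comp_apply, tailSubHead_add_one]
  simpa only [Function.comp_apply, tailSubHead_cons_zero] using
    (DiscreteMidpointConvex.of_submodular hs hinv).comp_cons_zero

end TailSubHead

lemma ddiff_psum {n : ℕ} (x : Fin n → ℤ) : ddiff (psum x) = x := by
  funext i
  simp only [ddiff, psum]
  split_ifs with h0
  · have : univ.filter (fun j => j ≤ i) = {i} := by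
      ext j
      simp only [mem_filter, mem_univ, true_and, mem_singleton, Fin.le_def, Fin.ext_iff]
      omega
    rw [this, sum_singleton, sub_zero]
  · set i' : Fin n := ⟨(i : ℕ) - 1, Nat.lt_of_le_of_lt (Nat.sub_le _ _) i.isLt⟩
    have : univ.filter (fun j => j ≤ i) = insert i (univ.filter (fun j => j ≤ i')) := by
      ext j
      simp only [i', mem_filter, mem_univ, true_and, mem_insert, Fin.le_def, Fin.ext_iff]
      omega
    rw [this, sum_insert (by simp only [i', mem_filter, mem_univ, true_and, Fin.le_def]; omega),
      add_sub_cancel_right]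

lemma multimodular_iff_submodular_comp_tailSubHead {n : ℕ} (f : (Fin n → ℤ) → EReal) :
    Multimodular f ↔ Submodular ((fun p => f (ddiff p)) ∘ tailSubHead) := by
  simp only [Multimodular, Function.comp_def, ddiff_tailSubHead]

theorem multimodular_iff_lnat {n : ℕ} (f : (Fin n → ℤ) → EReal)
    (hbot : ∀ x, f x ≠ ⊥) (hdom : ∃ x, f x ≠ ⊤) :
    (Multimodular f ↔ IsLNatFn (fun p => f (ddiff p))) ∧
    (∀ x : Fin n → ℤ, f x = (fun p => f (ddiff p)) (psum x)) := by
  have hrecover (x : Fin n → ℤ) : f x = f (ddiff (psum x)) := by rw [ddiff_psum]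
  have hdom' : ∃ p, f (ddiff p) ≠ ⊤ := by
    obtain ⟨x, hx⟩ := hdom
    exact ⟨psum x, hrecover x ▸ hx⟩
  refine ⟨?_, hrecover⟩
  rw [isLNatFn_iff, multimodular_iff_submodular_comp_tailSubHead,
    submodular_comp_tailSubHead_iff fun p => hbot _]
  exact (and_iff_right hdom').symm
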